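/- Let $c>0$, $r\ge 7c$, and let $\varphi,\psi:\mathbb{R}\to\mathbb{R}$ be such that $\varphi(a)=\frac{1}{c+\sqrt{r^2-a^2}}$ and $\psi(a)=c$ for $|a|\le \tfrac{5}{7}r$; $\varphi(a)=1$, $\psi(a)=c+1$ for $|a|\ge\tfrac{6}{7}r$; and $\varphi(a)\in[\frac{1}{c+\sqrt{r^2-a^2}},1]$, $\psi(a)\in[c,c+1]$ for $|a|\in[\tfrac57 r,\tfrac67 r]$. Define $f(y)=\varphi(|\tilde y|)(y_1+\psi(|\tilde y|))$ for $y=(y_1,\tilde y)\in\mathbb{R}\times\mathbb{R}^{d-1}$. Then: (i) $f$ is nonnegative on $\bar B_r \setminus \{y: y_1 < -c\}$; and (ii) $f(y)\ge 1$ on $\{y: |y|=r,\ y_1\ge -c\}$. -/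
import Mathlib


/-- the barrier function `f(y) = φ(|ỹ|)(y₁ + ψ(|ỹ|))` built from the cutoff
functions `φ, ψ` is (i) nonnegative on `B̄_r \ {y₁ < -c}` and (ii) at least `1` on
`{|y| = r, y₁ ≥ -c}`. -/
theorem stmt_12 (d : ℕ) (c r : ℝ) (hc : 0 < c) (hr : 7 * c ≤ r)
    (φ ψ : ℝ → ℝ)
    (h₁ : ∀ a : ℝ, |a| ≤ 5 / 7 * r →
      φ a = 1 / (c + Real.sqrt (r ^ 2 - a ^ 2)) ∧ ψ a = c)
    (h₂ : ∀ a : ℝ, 6 / 7 * r ≤ |a| → φ a = 1 ∧ ψ a = c + 1)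
    (h₃ : ∀ a : ℝ, |a| ∈ Set.Icc (5 / 7 * r) (6 / 7 * r) →
      φ a ∈ Set.Icc (1 / (c + Real.sqrt (r ^ 2 - a ^ 2))) 1 ∧ ψ a ∈ Set.Icc c (c + 1)) :
    (∀ y : ℝ × EuclideanSpace ℝ (Fin (d - 1)),
      y.1 ^ 2 + ‖y.2‖ ^ 2 ≤ r ^ 2 → -c ≤ y.1 →
      0 ≤ φ ‖y.2‖ * (y.1 + ψ ‖y.2‖)) ∧
    (∀ y : ℝ × EuclideanSpace ℝ (Fin (d - 1)),
      y.1 ^ 2 + ‖y.2‖ ^ 2 = r ^ 2 → -c ≤ y.1 →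
      1 ≤ φ ‖y.2‖ * (y.1 + ψ ‖y.2‖)) := by
  have hr0 : 0 < r := by linarith
  have hden : ∀ a : ℝ, 0 < c + Real.sqrt (r ^ 2 - a ^ 2) := fun a => by
    have := Real.sqrt_nonneg (r ^ 2 - a ^ 2); linarith
  have key : ∀ a : ℝ, 0 ≤ a → 0 < φ a ∧ c ≤ ψ a := by
    intro a ha
    have habs : |a| = a := abs_of_nonneg ha
    rcases le_or_gt a (5 / 7 * r) with h | h
    · obtain ⟨hφ', hψ'⟩ := h₁ a (by rw [habs]; exact h)
      rw [hφ', hψ']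
      exact ⟨div_pos one_pos (hden a), le_refl c⟩
    rcases le_or_gt (6 / 7 * r) a with h' | h'
    · obtain ⟨hφ', hψ'⟩ := h₂ a (by rw [habs]; exact h')
      rw [hφ', hψ']
      exact ⟨one_pos, by linarith⟩
    · obtain ⟨⟨hφ1, _⟩, ⟨hψ1, _⟩⟩ := h₃ a ⟨by rw [habs]; linarith, by rw [habs]; linarith⟩
      exact ⟨lt_of_lt_of_le (div_pos one_pos (hden a)) hφ1, hψ1⟩
  have keylow : ∀ a : ℝ, 0 ≤ a → a ≤ 6 / 7 * r →
      1 / (c + Real.sqrt (r ^ 2 - a ^ 2)) ≤ φ a := by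
    intro a ha h6
    have habs : |a| = a := abs_of_nonneg ha
    rcases le_or_gt a (5 / 7 * r) with h | h
    · obtain ⟨hφ', _⟩ := h₁ a (by rw [habs]; exact h)
      rw [hφ']
    · obtain ⟨⟨hφ1, _⟩, _⟩ := h₃ a ⟨by rw [habs]; linarith, by rw [habs]; exact h6⟩
      exact hφ1
  constructor
  · intro y hball hy1
    obtain ⟨hφ, hψ⟩ := key ‖y.2‖ (norm_nonneg _)
    exact mul_nonneg hφ.le (by linarith)
  · intro y hsph hy1
    have ha0 : (0:ℝ) ≤ ‖y.2‖ := norm_nonneg _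
    obtain ⟨hφ, hψ⟩ := key ‖y.2‖ ha0
    rcases le_or_gt (6 / 7 * r) ‖y.2‖ with h | h
    · obtain ⟨hφ', hψ'⟩ := h₂ ‖y.2‖ (by rw [abs_of_nonneg ha0]; exact h)
      rw [hφ', hψ']; linarith
    · have hy2 : 13 * c ^ 2 ≤ y.1 ^ 2 := by nlinarith
      have hy1pos : 0 < y.1 := by
        by_contra hcon
        push_neg at hcon
        nlinarith [mul_nonneg (neg_nonneg.mpr hcon) (by linarith : (0:ℝ) ≤ y.1 + c)]
      have hsqrt : Real.sqrt (r ^ 2 - ‖y.2‖ ^ 2) = y.1 := by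
        have h' : r ^ 2 - ‖y.2‖ ^ 2 = y.1 ^ 2 := by linarith
        rw [h', Real.sqrt_sq hy1pos.le]
      have hlow := keylow ‖y.2‖ ha0 h.le
      rw [hsqrt] at hlow
      have hcy : 0 < c + y.1 := by linarith
      calc (1:ℝ) = 1 / (c + y.1) * (y.1 + c) := by field_simp; ring
        _ ≤ φ ‖y.2‖ * (y.1 + c) := mul_le_mul_of_nonneg_right hlow (by linarith)
        _ ≤ φ ‖y.2‖ * (y.1 + ψ ‖y.2‖) := mul_le_mul_of_nonneg_left (by linarith) hφ.le
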